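/- arXiv:1604.04733 — 2 statements merged into one kernel-verified Lean document; each statement's English description precedes it below -/
import Mathlib

section
/- Let a, a' ∈ F, b, b' ∈ F^×, and α ∈ F with b + α² ≠ 0. Set μ = α² + b + b' and assume μ ≠ 0. If ([1,a'] ⊥ b'·[1,a']) ⊥ μ·([1,a'] ⊥ b'·[1,a']) is isometric to 4×ℍ, then the quadratic form [1,a] ⊥ ⟨b⟩ ⊥ (μb')·[1,a'] ⊥ ⟨μ⟩ is isotropic. -/
/-- The binary quadratic form `[b₁,b₂] : (x,y) ↦ b₁x² + xy + b₂y²` on `F × F`. -/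
def binQF (F : Type*) [Field F] (b₁ b₂ : F) : QuadraticForm F (F × F) :=
  LinearMap.BilinMap.toQuadraticMap (LinearMap.mk₂ F
    (fun p q : F × F => b₁ * (p.1 * q.1) + p.1 * q.2 + b₂ * (p.2 * q.2))
    (fun p p' q => by simp only [Prod.fst_add, Prod.snd_add]; ring)
    (fun a p q => by simp only [Prod.smul_fst, Prod.smul_snd, smul_eq_mul]; ring)
    (fun p q q' => by simp only [Prod.fst_add, Prod.snd_add]; ring)
    (fun a p q => by simp only [Prod.smul_fst, Prod.smul_snd, smul_eq_mul]; ring))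

lemma binQF_apply (F : Type*) [Field F] (b₁ b₂ : F) (p : F × F) :
    binQF F b₁ b₂ p = b₁ * (p.1 * p.1) + p.1 * p.2 + b₂ * (p.2 * p.2) := by
  simp [binQF, LinearMap.BilinMap.toQuadraticMap_apply]

/-- over a field of characteristic 2, let `α ∈ F` with `b + α² ≠ 0` and set
`μ = α² + b + b'`, assumed nonzero. If
`([1,a'] ⊥ b'·[1,a']) ⊥ μ·([1,a'] ⊥ b'·[1,a']) ≃ 4×ℍ`, then the quadratic form
`[1,a] ⊥ ⟨b⟩ ⊥ (μb')·[1,a'] ⊥ ⟨μ⟩` is isotropic. -/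
theorem stmt15 (F : Type*) [Field F] [CharP F 2] (a a' b b' : F)
    (hb : b ≠ 0) (hb' : b' ≠ 0) (al : F) (hba : b + al ^ 2 ≠ 0) (mu : F)
    (hmudef : mu = al ^ 2 + b + b') (hmu : mu ≠ 0)
    (hhyp : QuadraticMap.Equivalent
      (((binQF F 1 a').prod (b' • binQF F 1 a')).prod
        (mu • ((binQF F 1 a').prod (b' • binQF F 1 a'))))
      (QuadraticMap.pi (fun _ : Fin 4 => binQF F 0 0))) :
    ∃ v : (F × F) × (F × ((F × F) × F)), v ≠ 0 ∧
      ((binQF F 1 a).prod ((b • (QuadraticMap.sq : QuadraticForm F F)).prod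
        (((mu * b') • binQF F 1 a').prod
          (mu • (QuadraticMap.sq : QuadraticForm F F))))) v = 0 := by
  obtain ⟨g⟩ := hhyp
  have h2 : (2 : F) = 0 := by
    have := CharP.cast_eq_zero F 2
    simpa using this
  -- the linear embedding of F⁵ into the 8-dimensional space
  set ι : (F × F × F × (F × F)) →ₗ[F] (((F × F) × (F × F)) × ((F × F) × (F × F))) :=
    { toFun := fun v =>
        (((v.1 + al * v.2.1, 0), (v.2.2.1 + v.2.1, 0)), ((v.2.1, 0), v.2.2.2))
      map_add' := by
        intro v w
        ext <;> simp <;> ring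
      map_smul' := by
        intro c v
        ext <;> simp [mul_add] <;> ring } with hι
  -- second coordinates after applying the isometry
  set π : (Fin 4 → F × F) →ₗ[F] (Fin 4 → F) :=
    LinearMap.pi (fun i => (LinearMap.snd F F F).comp (LinearMap.proj i)) with hπ
  set L : (F × F × F × (F × F)) →ₗ[F] (Fin 4 → F) :=
    π ∘ₗ (g.toLinearEquiv : _ →ₗ[F] _) ∘ₗ ι with hL
  have hker : LinearMap.ker L ≠ ⊥ := by
    intro h
    have hinj : Function.Injective L := LinearMap.ker_eq_bot.mp h
    have hle := LinearMap.finrank_le_finrank_of_injective hinj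
    simp [Module.finrank_prod, Module.finrank_pi, Module.finrank_self] at hle
  obtain ⟨v, hvker, hv0⟩ := Submodule.ne_bot_iff _ |>.mp hker
  obtain ⟨e, f, gg, s1, s2⟩ := v
  -- the image vector is isotropic for the 8-dimensional form
  have hsnd : ∀ i, (g.toLinearEquiv (ι (e, f, gg, s1, s2)) i).2 = 0 := by
    intro i
    have := congrFun (LinearMap.mem_ker.mp hvker) i
    simpa [hL, hπ] using this
  have hQ :
      (((binQF F 1 a').prod (b' • binQF F 1 a')).prod
        (mu • ((binQF F 1 a').prod (b' • binQF F 1 a')))) (ι (e, f, gg, s1, s2)) = 0 := by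
    rw [← g.map_app]
    rw [QuadraticMap.pi_apply]
    refine Finset.sum_eq_zero fun i _ => ?_
    rw [binQF_apply]
    have h0 : (g (ι (e, f, gg, s1, s2)) i).2 = 0 := hsnd i
    rw [h0]
    ring
  rw [show (ι (e, f, gg, s1, s2)) =
      (((e + al * f, 0), (gg + f, 0)), ((f, 0), (s1, s2))) from rfl] at hQ
  simp only [QuadraticMap.prod_apply, QuadraticMap.smul_apply, binQF_apply, smul_eq_mul] at hQ
  refine ⟨((e + al * gg, 0), (f + gg, ((s1, s2), gg))), ?_, ?_⟩
  · intro hzero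
    apply hv0
    simp only [Prod.ext_iff, Prod.fst_zero, Prod.snd_zero] at hzero ⊢
    obtain ⟨⟨hx, -⟩, hz, ⟨hs1, hs2⟩, hw⟩ := hzero
    have hgg : gg = 0 := hw
    have hf : f = 0 := by rw [hgg, add_zero] at hz; exact hz
    have he : e = 0 := by rw [hgg, mul_zero, add_zero] at hx; exact hx
    exact ⟨he, hf, hgg, hs1, hs2⟩
  · simp only [QuadraticMap.prod_apply, QuadraticMap.smul_apply, binQF_apply,
      QuadraticMap.sq_apply, smul_eq_mul]
    subst hmudef
    linear_combination hQ + (al*e*gg + b*f*gg + al^2*gg^2 + b*gg^2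
      - al*e*f - b'*gg*f - al^2*f^2 - b'*f^2) * h2
end

section
/- Let a', b', μ ∈ F with b' ≠ 0, μ ≠ 0 and b' + μ ≠ 0. Then there exists c ∈ F such that b'·[1,a'] ⊥ ⟨μ⟩ ≃ (b'+μ)·[1,c] ⊥ ⟨μ⟩. -/
section

variable {F : Type*} [Field F]

@[simp]
theorem binQF_apply_s16 (b₁ b₂ x y : F) : binQF F b₁ b₂ (x, y) = b₁ * x ^ 2 + x * y + b₂ * y ^ 2 := by
  simp only [binQF, LinearMap.BilinMap.toQuadraticMap_apply, LinearMap.mk₂_apply]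
  ring

@[simps apply]
def shearScaleEquiv (t : F) (ht : t ≠ 0) : ((F × F) × F) ≃ₗ[F] ((F × F) × F) where
  toFun p := ((p.1.1, t * p.1.2), p.1.1 + p.2)
  invFun p := ((p.1.1, t⁻¹ * p.1.2), p.2 - p.1.1)
  map_add' p q := by simp only [Prod.fst_add, Prod.snd_add, Prod.mk_add_mk]; ring_nf
  map_smul' a p := by simp only [Prod.smul_fst, Prod.smul_snd, smul_eq_mul, Prod.smul_mk,
    RingHom.id_apply, mul_add, mul_left_comm]
  left_inv p := by simp only [inv_mul_cancel_left₀ ht, add_sub_cancel_left]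
  right_inv p := by simp only [mul_inv_cancel_left₀ ht, add_sub_cancel]

theorem smul_binQF_prod_sq_equivalent [CharP F 2] (a b μ : F) (hb : b ≠ 0) (hbμ : b + μ ≠ 0) :
    ((b • binQF F 1 a).prod (μ • (QuadraticMap.sq : QuadraticForm F F))).Equivalent
      (((b + μ) • binQF F 1 (a * (b + μ) / b)).prod (μ • (QuadraticMap.sq : QuadraticForm F F))) := by
  let e := shearScaleEquiv (b / (b + μ)) (div_ne_zero hb hbμ)
  have isometry : ∀ p, ((b + μ) • binQF F 1 (a * (b + μ) / b)).prod (μ • QuadraticMap.sq) (e p) =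
      (b • binQF F 1 a).prod (μ • QuadraticMap.sq) p := by
    rintro ⟨⟨x, y⟩, z⟩
    simp only [e, shearScaleEquiv_apply, QuadraticMap.prod_apply, smul_apply, binQF_apply_s16,
      QuadraticMap.sq_apply, smul_eq_mul]
    field_simp
    rw [CharTwo.add_sq]
    linear_combination μ * x ^ 2 * CharTwo.two_eq_zero (R := F)
  exact ⟨{ e with map_app' := isometry }⟩

end

theorem stmt16_general (F : Type*) [Field F] [CharP F 2] (a' b' mu : F)
    (hb' : b' ≠ 0) (hbmu : b' + mu ≠ 0) :
    ∃ c : F,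
      QuadraticMap.Equivalent
        ((b' • binQF F 1 a').prod (mu • (QuadraticMap.sq : QuadraticForm F F)))
        (((b' + mu) • binQF F 1 c).prod (mu • (QuadraticMap.sq : QuadraticForm F F))) :=
  ⟨_, smul_binQF_prod_sq_equivalent a' b' mu hb' hbmu⟩

/-- over a field of characteristic 2, if `b' ≠ 0`, `μ ≠ 0` and `b' + μ ≠ 0`,
then there exists `c ∈ F` with `b'·[1,a'] ⊥ ⟨μ⟩ ≃ (b'+μ)·[1,c] ⊥ ⟨μ⟩`. -/
theorem stmt16 (F : Type*) [Field F] [CharP F 2] (a' b' mu : F)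
    (hb' : b' ≠ 0) (hmu : mu ≠ 0) (hbmu : b' + mu ≠ 0) :
    ∃ c : F,
      QuadraticMap.Equivalent
        ((b' • binQF F 1 a').prod (mu • (QuadraticMap.sq : QuadraticForm F F)))
        (((b' + mu) • binQF F 1 c).prod (mu • (QuadraticMap.sq : QuadraticForm F F))) :=
  stmt16_general F a' b' mu hb' hbmu
end
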